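/- For a nonzero ordinal γ and nonzero finite m, the ordinal ω^γ·m + 1 (with the order topology) is not homeomorphic to any subspace of ω^γ·m; in particular ω^γ·m + 1 and ω^γ·m are not biembeddable. -/

import Mathlib

open Set Ordinal
open scoped Cardinal

noncomputable section

/-- Derived set (non-isolated points) of a set of ordinals, as a subspace. -/
def deriv' (s : Set Ordinal.{0}) : Set Ordinal.{0} := {x ∈ s | x ∈ closure (s \ {x})}

/-- Iterated Cantor–Bendixson derivative. -/
def iterDeriv (s : Set Ordinal.{0}) (o : Ordinal.{0}) : Set Ordinal.{0} :=
  Ordinal.limitRecOn o s (fun _ ih => deriv' ih) (fun o _ ih => ⋂ (p : Ordinal.{0}) (h : p < o), ih p h)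

/-- `s` contains a homeomorphic copy of the ordinal `α` (with its order topology). -/
def HomeoCopy (α : Ordinal.{0}) (s : Set Ordinal.{0}) : Prop :=
  ∃ t : Set Ordinal, t ⊆ s ∧ Nonempty ((Iio α : Set Ordinal.{0}) ≃ₜ t)

/-- Two ordinals are biembeddable: each is homeomorphic to a subspace of the other. -/
def Biembed (α β : Ordinal.{0}) : Prop := HomeoCopy α (Iio β) ∧ HomeoCopy β (Iio α)

/-- Two sets of ordinals are order-homeomorphic: there is an order-preserving homeomorphism. -/
def OrderHomeo (X Y : Set Ordinal.{0}) : Prop :=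
  ∃ e : X ≃ₜ Y, ∀ a b : X, a ≤ b ↔ e a ≤ e b

/-- An ordinal is order-reinforcing. -/
def OrderReinforcing (α : Ordinal.{0}) : Prop :=
  ∀ X : Set Ordinal, Nonempty ((Iio α : Set Ordinal.{0}) ≃ₜ X) → ∃ Y ⊆ X, OrderHomeo (Iio α) Y

/-- The Cantor–Bendixson rank of an ordinal: the least exponent in its Cantor normal form. -/
def CB (x : Ordinal.{0}) : Ordinal := if x = 0 then 0 else sSup {γ | (ω : Ordinal.{0}) ^ γ ∣ x}

/-- Natural (Hessenberg) addition, as Mathlib's former `Ordinal.nadd`. -/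
def Ordinal.nadd.{u} : Ordinal.{u} → Ordinal.{u} → Ordinal.{u}
  | a, b =>
    max (blsub.{u, u} a fun a' _ => Ordinal.nadd a' b) (blsub.{u, u} b fun b' _ => Ordinal.nadd a b')
termination_by a b => (a, b)
decreasing_by
  all_goals first | (apply Prod.Lex.left; assumption) | (apply Prod.Lex.right; assumption)

infixl:65 " ♯ " => Ordinal.nadd

/-- The natural (Hessenberg) sum of a finite family of ordinals. -/
def natSumFam {k : ℕ} (α : Fin k → Ordinal.{0}) : Ordinal := (List.ofFn α).foldr (· ♯ ·) 0

/-- The Milner–Rado sum of a finite family of ordinals. -/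
def mrSumFam {k : ℕ} (α : Fin k → Ordinal.{0}) : Ordinal :=
  sInf {δ | ∀ β : Fin k → Ordinal, (∀ i, β i < α i) → δ ≠ natSumFam β}

/-- The topological pigeonhole relation `β → (top α i)¹` for finitely many colours. -/
def TopPH {k : ℕ} (β : Ordinal.{0}) (α : Fin k → Ordinal.{0}) : Prop :=
  ∀ c : Ordinal → Fin k, ∃ i, HomeoCopy (α i) (Iio β ∩ c ⁻¹' {i})

/-- The topological pigeonhole relation with an arbitrary index type of colours. -/
def TopPHFam {ι : Type*} (β : Ordinal.{0}) (α : ι → Ordinal.{0}) : Prop :=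
  ∀ c : Ordinal → ι, ∃ i, HomeoCopy (α i) (Iio β ∩ c ⁻¹' {i})

/-- `ω̄[γ, m]`: `ω ^ γ * m + 1` if `γ > 0`, and `m` if `γ = 0`. -/
def obar (γ : Ordinal.{0}) (m : ℕ) : Ordinal := if γ = 0 then (m : Ordinal.{0}) else ω ^ γ * m + 1

/-- `C` is closed and unbounded in `o`. -/
def IsClubIn (C : Set Ordinal.{0}) (o : Ordinal.{0}) : Prop :=
  C ⊆ Iio o ∧ (∀ x < o, ∃ y ∈ C, x ≤ y) ∧
    ∀ x < o, x ≠ 0 → (∀ y < x, ∃ z ∈ C, y < z ∧ z < x) → x ∈ C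

/-- `S` is stationary in `o`: it meets every club subset of `o`. -/
def StationaryIn (S : Set Ordinal.{0}) (o : Ordinal.{0}) : Prop :=
  ∀ C, IsClubIn C o → (S ∩ C).Nonempty

/-!
A homeomorphism transports Cantor–Bendixson derivatives, so a copy of `ω^γ·m + 1` inside
`ω^γ·m` injects the `γ`-th derivative of `ω^γ·m + 1` into that of `ω^γ·m`. The `γ`-th derivative
of an initial segment `Iio α` consists of the nonzero multiples of `ω^γ` below `α`; for
`β = ω^γ·m` it is therefore finite, and the derivative of `β + 1` is that of `β` together
with `β` itself, which is one element too many.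
-/

open CantorBendixson Filter Topology

universe u

namespace CantorBendixson

variable {X Y : Type u} [TopologicalSpace X] [TopologicalSpace Y]

theorem iteratedDerivedSet_subset (s : Set X) (a : Ordinal) : sᵈ[a] ⊆ s := by
  simpa using iteratedDerivedSet_antitone s (zero_le : 0 ≤ a)

theorem _root_.Topology.IsEmbedding.accPt_principal_image_iff {f : X → Y} (hf : IsEmbedding f)
    {x : X} {s : Set X} : AccPt (f x) (𝓟 (f '' s)) ↔ AccPt x (𝓟 s) := by
  rw [accPt_principal_iff_clusterPt, accPt_principal_iff_clusterPt,
    ← hf.isInducing.mapClusterPt_iff, MapClusterPt, map_principal, image_sdiff hf.injective,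
    image_singleton]

theorem _root_.Topology.IsEmbedding.image_relDerivedSet {f : X → Y} (hf : IsEmbedding f)
    (s : Set X) : f '' relDerivedSet s = relDerivedSet (f '' s) := by
  ext y
  constructor
  · rintro ⟨x, ⟨hx, hxs⟩, rfl⟩
    exact ⟨hf.accPt_principal_image_iff.2 hx, mem_image_of_mem f hxs⟩
  · rintro ⟨hy, x, hxs, rfl⟩
    exact ⟨x, ⟨hf.accPt_principal_image_iff.1 hy, hxs⟩, rfl⟩

theorem _root_.Topology.IsEmbedding.image_iteratedDerivedSet {f : X → Y} (hf : IsEmbedding f)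
    (s : Set X) (a : Ordinal) : f '' sᵈ[a] = (f '' s)ᵈ[a] := by
  induction a using Ordinal.limitRecOn with
  | zero => simp
  | add_one a ih =>
    rw [iteratedDerivedSet_succ, iteratedDerivedSet_succ, hf.image_relDerivedSet, ih]
  | limit a ha ih =>
    have : Nonempty (Iio a) := ⟨⟨0, ha.bot_lt⟩⟩
    rw [iteratedDerivedSet_limit ha, iteratedDerivedSet_limit ha,
      hf.injective.injOn.image_iInter_eq]
    exact iInter_congr fun b => ih b b.2

end CantorBendixson

namespace Ordinal

theorem opow_dvd_of_isSuccLimit {b x δ : Ordinal} (hb : 1 < b) (hδ : Order.IsSuccLimit δ)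
    (h : ∀ p < δ, b ^ p ∣ x) : b ^ δ ∣ x := by
  rw [dvd_iff_mod_eq_zero]
  obtain ⟨p, hp, hxp⟩ := ((isNormal_opow hb).lt_iff_exists_lt hδ).1
    (mod_lt x (opow_ne_zero δ (zero_lt_one.trans hb).ne'))
  have hmod : x % b ^ δ % b ^ p = x % b ^ p := mod_mod_of_dvd x (opow_dvd_opow b hp.le)
  rwa [mod_eq_of_lt hxp, dvd_iff_mod_eq_zero.1 (h p hp)] at hmod

theorem relDerivedSet_setOf_opow_dvd_subset (o : Ordinal) :
    relDerivedSet {x : Ordinal | ω ^ o ∣ x} ⊆ {x | ω ^ (o + 1) ∣ x} := by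
  rintro _ ⟨hacc, c, rfl⟩
  have hpos : 0 < ω ^ o := opow_pos o omega0_pos
  rw [mem_ofPred_eq, opow_add, opow_one]
  refine mul_dvd_mul_left _ (isSuccPrelimit_iff_omega0_dvd.1
    (Order.isSuccPrelimit_of_succ_ne fun d hd => ?_))
  subst hd
  obtain ⟨_, ⟨k, rfl⟩, hdk, hkd⟩ := (SuccOrder.accPt_principal.1 hacc).2 (ω ^ o * d)
    ((mul_lt_mul_iff_right₀ hpos).2 (Order.lt_succ d))
  exact (Order.lt_succ_iff.1 ((mul_lt_mul_iff_right₀ hpos).1 hkd)).not_gt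
    ((mul_lt_mul_iff_right₀ hpos).1 hdk)

theorem setOf_opow_succ_dvd_subset_relDerivedSet (α o : Ordinal) :
    {x | x < α ∧ x ≠ 0 ∧ ω ^ (o + 1) ∣ x} ⊆ relDerivedSet {x | x < α ∧ x ≠ 0 ∧ ω ^ o ∣ x} := by
  rintro _ ⟨hxα, hx0, c, rfl⟩
  have hpos : 0 < ω ^ o := opow_pos o omega0_pos
  have hlim : Order.IsSuccLimit (ω * c) :=
    isSuccLimit_mul_left isSuccLimit_omega0 (pos_iff_ne_zero.2 (right_ne_zero_of_mul hx0))
  rw [opow_add, opow_one, mul_assoc] at hxα hx0 ⊢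
  refine ⟨SuccOrder.accPt_principal.2 ⟨not_isMin_iff.2 ⟨0, pos_iff_ne_zero.2 hx0⟩, fun b hb => ?_⟩,
    hxα, hx0, dvd_mul_right _ _⟩
  obtain ⟨c', hc', hbc'⟩ := (lt_mul_iff_of_isSuccLimit hlim).1 hb
  have hlt : ω ^ o * c' < ω ^ o * (ω * c) := (mul_lt_mul_iff_right₀ hpos).2 hc'
  exact ⟨ω ^ o * c', ⟨hlt.trans hxα, (hbc'.trans_le' bot_le).ne', dvd_mul_right _ _⟩, hbc', hlt⟩

-- Derivatives of sets of `Ordinal.{u}` are indexed by `Ordinal.{u + 1}`, hence the `lift`.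
theorem iteratedDerivedSet_subset_setOf_opow_dvd (s : Set Ordinal.{u}) (δ : Ordinal.{u}) :
    sᵈ[lift.{u + 1} δ] ⊆ {x | ω ^ δ ∣ x} := by
  induction δ using limitRecOn with
  | zero => simp
  | add_one o ih =>
    rw [lift_add, lift_one, iteratedDerivedSet_succ]
    exact (relDerivedSet.monotone ih).trans (relDerivedSet_setOf_opow_dvd_subset o)
  | limit δ hδ ih =>
    intro x hx
    rw [iteratedDerivedSet_limit (isSuccLimit_lift.2 hδ), mem_iInter] at hx
    exact opow_dvd_of_isSuccLimit one_lt_omega0 hδ fun p hp => ih p hp (hx ⟨lift p, lift_lt.2 hp⟩)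

theorem setOf_opow_dvd_subset_iteratedDerivedSet_Iio (α δ : Ordinal.{u}) :
    {x | x < α ∧ x ≠ 0 ∧ ω ^ δ ∣ x} ⊆ (Iio α)ᵈ[lift.{u + 1} δ] := by
  induction δ using limitRecOn with
  | zero =>
    rw [lift_zero, iteratedDerivedSet_zero]
    exact fun x hx => hx.1
  | add_one o ih =>
    rw [lift_add, lift_one, iteratedDerivedSet_succ]
    exact (setOf_opow_succ_dvd_subset_relDerivedSet α o).trans (relDerivedSet.monotone ih)
  | limit δ hδ ih =>
    intro x hx
    rw [iteratedDerivedSet_limit (isSuccLimit_lift.2 hδ), mem_iInter]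
    rintro ⟨b, hb⟩
    obtain ⟨p, hp, rfl⟩ := lt_lift_iff.1 hb
    exact ih p hp ⟨hx.1, hx.2.1, (opow_dvd_opow ω hp.le).trans hx.2.2⟩

theorem finite_setOf_lt_mul_natCast_dvd (a : Ordinal) (n : ℕ) :
    {x | x < a * n ∧ a ∣ x}.Finite := by
  refine ((finite_Iio n).image fun k : ℕ => a * k).subset ?_
  rintro _ ⟨hx, c, rfl⟩
  obtain ⟨k, hk, rfl⟩ : c ∈ Nat.cast '' Iio n := by
    rw [natCast_image_Iio]
    exact lt_of_mul_lt_mul_left' hx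
  exact mem_image_of_mem _ hk

end Ordinal

theorem HomeoCopy.encard_iteratedDerivedSet_le {α : Ordinal.{0}} {s : Set Ordinal.{0}}
    (h : HomeoCopy α s) (a : Ordinal) : ((Iio α)ᵈ[a]).encard ≤ (sᵈ[a]).encard := by
  obtain ⟨t, hts, ⟨e⟩⟩ := h
  have he : IsEmbedding (Subtype.val ∘ e) := IsEmbedding.subtypeVal.comp e.isEmbedding
  have hIio : Subtype.val '' (univ : Set (Iio α))ᵈ[a] = (Iio α)ᵈ[a] := by
    rw [IsEmbedding.subtypeVal.image_iteratedDerivedSet, image_univ, Subtype.range_coe]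
  have ht : (Subtype.val ∘ e) '' (univ : Set (Iio α))ᵈ[a] = tᵈ[a] := by
    rw [he.image_iteratedDerivedSet, image_univ, range_comp, e.range_coe, image_univ,
      Subtype.range_coe]
  calc ((Iio α)ᵈ[a]).encard
      = ((univ : Set (Iio α))ᵈ[a]).encard := by rw [← hIio, Subtype.val_injective.encard_image]
    _ = (tᵈ[a]).encard := by rw [← ht, he.injective.encard_image]
    _ ≤ (sᵈ[a]).encard := encard_le_encard (iteratedDerivedSet_mono hts a)

theorem not_homeoCopy_add_one {β : Ordinal.{0}} {a : Ordinal} (hfin : ((Iio β)ᵈ[a]).Finite)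
    (hβ : β ∈ (Iio (β + 1))ᵈ[a]) : ¬ HomeoCopy (β + 1) (Iio β) := by
  intro h
  have hβ' : β ∉ (Iio β)ᵈ[a] := fun hβ' => lt_irrefl β (iteratedDerivedSet_subset _ a hβ')
  have hsub : insert β ((Iio β)ᵈ[a]) ⊆ (Iio (β + 1))ᵈ[a] :=
    insert_subset hβ (iteratedDerivedSet_mono (Iio_subset_Iio (le_add_right le_rfl)) a)
  have hle := (encard_le_encard hsub).trans (h.encard_iteratedDerivedSet_le a)
  rw [encard_insert_of_notMem hβ', ENat.add_one_le_iff hfin.encard_lt_top.ne] at hle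
  exact hle.false

theorem not_biembed_succ_self_general (γ m : Ordinal.{0}) (hm : m ≠ 0) (hmfin : m < ω) :
    ¬ HomeoCopy (ω ^ γ * m + 1) (Iio (ω ^ γ * m)) ∧ ¬ Biembed (ω ^ γ * m + 1) (ω ^ γ * m) := by
  obtain ⟨n, rfl⟩ := lt_omega0.1 hmfin
  have hfin : ((Iio (ω ^ γ * n))ᵈ[lift γ]).Finite :=
    (finite_setOf_lt_mul_natCast_dvd _ n).subset fun x hx =>
      ⟨iteratedDerivedSet_subset _ _ hx, iteratedDerivedSet_subset_setOf_opow_dvd _ γ hx⟩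
  have hmem : ω ^ γ * n ∈ (Iio (ω ^ γ * n + 1))ᵈ[lift γ] :=
    setOf_opow_dvd_subset_iteratedDerivedSet_Iio _ γ
      ⟨lt_add_one _, mul_ne_zero (opow_ne_zero γ omega0_ne_zero) hm, dvd_mul_right _ _⟩
  have key := not_homeoCopy_add_one hfin hmem
  exact ⟨key, fun h => key h.1⟩

/-- `ω^γ·m + 1` is not homeomorphic to any subspace of `ω^γ·m`; in particular they are
not biembeddable. -/
theorem not_biembed_succ_self (γ m : Ordinal.{0}) (hγ : γ ≠ 0) (hm : m ≠ 0) (hmfin : m < ω) :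
    ¬ HomeoCopy (ω ^ γ * m + 1) (Iio (ω ^ γ * m)) ∧ ¬ Biembed (ω ^ γ * m + 1) (ω ^ γ * m) :=
  not_biembed_succ_self_general γ m hm hmfin

end
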